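/- arXiv:1807.00130 — 2 statements merged into one kernel-verified Lean document; each statement's English description precedes it below -/
import Mathlib

section
/- Fix natural numbers n ≥ 1 and ε, data y : ZMod n → ℝ, and λ ≥ 0. A strategy profile (f, c) with f, c : ZMod n → ℝ is a Nash equilibrium of the asymmetric co-operative game if and only if for every t ∈ ZMod n: c(t) = (A f)(t) and f(t) = (y(t) + λ·c(t))/(1+λ). Consequently, at any Nash equilibrium the predictor satisfies the fixed-point equation f = (1/(1+λ)) · (y + λ · A f). -/
/-- The window-averaging operator `A` on functions `ZMod n → ℝ`:
`(A f)(t) = (1/(2ε+1)) · ∑_{s = -ε}^{ε} f(t + s)`. -/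
noncomputable def winAvg (n ε : ℕ) (f : ZMod n → ℝ) : ZMod n → ℝ :=
  fun t => (1 / (2 * (ε : ℝ) + 1)) * ∑ s ∈ Finset.Icc (-(ε : ℤ)) (ε : ℤ), f (t + (s : ZMod n))

/-- Nash equilibrium of the asymmetric co-operative game: (i) each constant
explainer `c t` minimizes the local deviation `∑_{s=-ε}^{ε} (f(t+s) - γ)²`;
(ii) the predictor `f` minimizes `∑_t [(f'(t) - y(t))² + λ (f'(t) - c(t))²]`. -/
def AsymEquilibrium (n ε : ℕ) [NeZero n] (y : ZMod n → ℝ) (lam : ℝ)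
    (f c : ZMod n → ℝ) : Prop :=
  (∀ t : ZMod n, ∀ γ : ℝ,
    ∑ s ∈ Finset.Icc (-(ε : ℤ)) (ε : ℤ), (f (t + (s : ZMod n)) - c t) ^ 2 ≤
    ∑ s ∈ Finset.Icc (-(ε : ℤ)) (ε : ℤ), (f (t + (s : ZMod n)) - γ) ^ 2) ∧
  (∀ f' : ZMod n → ℝ,
    ∑ t : ZMod n, ((f t - y t) ^ 2 + lam * (f t - c t) ^ 2) ≤
    ∑ t : ZMod n, ((f' t - y t) ^ 2 + lam * (f' t - c t) ^ 2))

/-! Both players solve separable least-squares problems, so everything follows from completing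
the square. For the explainer, `∑ (a s - γ)² = ∑ (a s - ā)² + N (γ - ā)²` with `ā` the window mean,
so the best response is `c t = (A f) t`. For the predictor, the objective is a sum over `t` of
terms depending on `f t` alone, hence minimized coordinatewise, and
`(x - y)² + λ (x - c)² = const + (1 + λ) (x - m)²` with `m = (y + λ c) / (1 + λ)`. -/

open Finset

theorem Finset.sum_sub_sq_eq_sum_sub_mean_sq_add {ι : Type*} (S : Finset ι) (a : ι → ℝ)
    (γ : ℝ) :
    ∑ i ∈ S, (a i - γ) ^ 2 =
      ∑ i ∈ S, (a i - (∑ i ∈ S, a i) / #S) ^ 2 + #S * (γ - (∑ i ∈ S, a i) / #S) ^ 2 := by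
  rcases S.eq_empty_or_nonempty with rfl | hS
  · simp
  set μ := (∑ i ∈ S, a i) / #S
  have hμ : #S * μ = ∑ i ∈ S, a i := mul_div_cancel₀ _ (by positivity)
  have expand (δ : ℝ) :
      ∑ i ∈ S, (a i - δ) ^ 2 = ∑ i ∈ S, a i ^ 2 - 2 * (∑ i ∈ S, a i) * δ + #S * δ ^ 2 := by
    simp only [sub_sq, sum_add_distrib, sum_sub_distrib, ← sum_mul, ← mul_sum, sum_const,
      nsmul_eq_mul]
  rw [expand γ, expand μ]
  linear_combination (2 * γ - 2 * μ) * hμ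

theorem forall_le_iff_of_eq_add_mul_sq {F : ℝ → ℝ} {C k μ : ℝ} (hk : 0 < k)
    (hF : ∀ z, F z = C + k * (z - μ) ^ 2) (x : ℝ) : (∀ z, F x ≤ F z) ↔ x = μ := by
  simp only [hF, add_le_add_iff_left]
  constructor
  · intro h
    have hle := h μ
    rw [sub_self, zero_pow two_ne_zero, mul_zero] at hle
    have : (x - μ) ^ 2 = 0 := le_antisymm (nonpos_of_mul_nonpos_right hle hk) (sq_nonneg _)
    exact sub_eq_zero.mp (pow_eq_zero_iff two_ne_zero |>.mp this)
  · rintro rfl z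
    rw [sub_self, zero_pow two_ne_zero, mul_zero]
    positivity

theorem Finset.forall_sum_sub_sq_le_iff {ι : Type*} {S : Finset ι} (hS : S.Nonempty)
    (a : ι → ℝ) (c : ℝ) :
    (∀ γ, ∑ i ∈ S, (a i - c) ^ 2 ≤ ∑ i ∈ S, (a i - γ) ^ 2) ↔ c = (∑ i ∈ S, a i) / #S :=
  forall_le_iff_of_eq_add_mul_sq (by simpa using hS.card_pos)
    (S.sum_sub_sq_eq_sum_sub_mean_sq_add a) c

theorem forall_sq_add_mul_sq_le_iff {a b lam : ℝ} (hlam : 0 < 1 + lam) (x : ℝ) :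
    (∀ x', (x - a) ^ 2 + lam * (x - b) ^ 2 ≤ (x' - a) ^ 2 + lam * (x' - b) ^ 2) ↔
      x = (a + lam * b) / (1 + lam) := by
  set m := (a + lam * b) / (1 + lam)
  have hm : m * (1 + lam) = a + lam * b := div_mul_cancel₀ _ hlam.ne'
  have key (z : ℝ) : (z - a) ^ 2 + lam * (z - b) ^ 2 =
      (m - a) ^ 2 + lam * (m - b) ^ 2 + (1 + lam) * (z - m) ^ 2 := by
    linear_combination (2 * z - 2 * m) * hm
  exact forall_le_iff_of_eq_add_mul_sq hlam key x

theorem Fintype.forall_sum_le_sum_iff_forall_le {ι α : Type*} [Fintype ι] [DecidableEq ι]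
    (g : ι → α → ℝ) (f : ι → α) :
    (∀ f' : ι → α, ∑ i, g i (f i) ≤ ∑ i, g i (f' i)) ↔ ∀ i x, g i (f i) ≤ g i x := by
  refine ⟨fun h i x => ?_, fun h f' => sum_le_sum fun i _ => h i (f' i)⟩
  have hle := h (Function.update f i x)
  simp only [Function.apply_update g f i x] at hle
  rwa [sum_update_of_mem (mem_univ i), sum_eq_add_sum_sdiff_singleton_of_mem (mem_univ i),
    add_le_add_iff_right] at hle

theorem card_Icc_neg_self (ε : ℕ) : (#(Icc (-(ε : ℤ)) ε) : ℝ) = 2 * ε + 1 := by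
  rw [Int.card_Icc, show (ε + 1 - -ε : ℤ).toNat = 2 * ε + 1 by omega]
  push_cast
  ring

theorem winAvg_eq_sum_div_card (n ε : ℕ) (f : ZMod n → ℝ) (t : ZMod n) :
    winAvg n ε f t =
      (∑ s ∈ Icc (-(ε : ℤ)) ε, f (t + (s : ZMod n))) / #(Icc (-(ε : ℤ)) ε) := by
  rw [winAvg, card_Icc_neg_self, one_div_mul_eq_div]

theorem asymEquilibrium_iff {n ε : ℕ} [NeZero n] {y : ZMod n → ℝ} {lam : ℝ}
    (hlam : 0 < 1 + lam) (f c : ZMod n → ℝ) :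
    AsymEquilibrium n ε y lam f c ↔
      ∀ t, c t = winAvg n ε f t ∧ f t = (y t + lam * c t) / (1 + lam) := by
  rw [AsymEquilibrium, forall_and]
  refine and_congr (forall_congr' fun t => ?_) ?_
  · rw [winAvg_eq_sum_div_card]
    exact forall_sum_sub_sq_le_iff (nonempty_Icc.mpr (by omega)) _ _
  · exact (Fintype.forall_sum_le_sum_iff_forall_le
      (fun t x => (x - y t) ^ 2 + lam * (x - c t) ^ 2) f).trans
      (forall_congr' fun t => forall_sq_add_mul_sq_le_iff hlam (f t))

/-- `(f, c)` is a Nash equilibrium of the asymmetric co-operative game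
iff for every `t`, `c t = (A f) t` and `f t = (y t + λ c t)/(1+λ)`; consequently,
at any Nash equilibrium `f = (1/(1+λ)) · (y + λ · A f)`. -/
theorem asymmetric_equilibrium_characterization (n ε : ℕ) [NeZero n]
    (y : ZMod n → ℝ) (lam : ℝ) (hlam : 0 ≤ lam) :
    (∀ f c : ZMod n → ℝ,
      AsymEquilibrium n ε y lam f c ↔
      (∀ t : ZMod n, c t = winAvg n ε f t ∧
        f t = (y t + lam * c t) / (1 + lam))) ∧
    (∀ f c : ZMod n → ℝ, AsymEquilibrium n ε y lam f c →
      ∀ t : ZMod n, f t = (1 / (1 + lam)) * (y t + lam * winAvg n ε f t)) := by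
  have hlam₁ : 0 < 1 + lam := by linarith
  refine ⟨asymEquilibrium_iff hlam₁, fun f c h t => ?_⟩
  obtain ⟨hc, hf⟩ := (asymEquilibrium_iff hlam₁ f c).mp h t
  rw [hf, hc, one_div_mul_eq_div]
end

section
/- Fix natural numbers n ≥ 1 and ε, data y : ZMod n → ℝ, and λ ≥ 0. The equation f = (1/(1+λ)) · (y + λ · A² f) has a unique solution f : ZMod n → ℝ, and this solution is the recursive convolutional average f = (1/(1+λ)) · Σ_{k=0}^{∞} (λ/(1+λ))^k · A^{2k} y, where the series converges in sup norm. In particular, the symmetric-game equilibrium predictor has the same geometric decay rate λ/(1+λ) as the asymmetric-game equilibrium predictor, but its convolutional kernel at step k is A^{2k} instead of A^k (the kernel evolves twice as fast). -/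
/-- The sup norm `‖f‖ = max_t |f(t)|` of `f : ZMod n → ℝ` (for `n ≥ 1`). -/
noncomputable def supNorm {n : ℕ} [NeZero n] (f : ZMod n → ℝ) : ℝ :=
  Finset.univ.sup' Finset.univ_nonempty fun t => |f t|

open Filter Topology Finset

section NeumannSeries

variable {E : Type*} [NormedAddCommGroup E] [NormedSpace ℝ E]

lemma iterate_affine_zero_eq_sum (B : E →ₗ[ℝ] E) (u : E) (q : ℝ) (m : ℕ) :
    (fun x => u + q • B x)^[m] 0 = ∑ k ∈ range m, q ^ k • (B ^ k) u := by
  induction m with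
  | zero => simp
  | succ m ih =>
    rw [Function.iterate_succ_apply', ih, map_sum, smul_sum, sum_range_succ', add_comm]
    simp only [map_smul, smul_smul, pow_succ', Module.End.mul_apply, pow_zero, one_smul,
      Module.End.one_apply]

lemma contractingWith_affine (B : E →ₗ[ℝ] E) (hB : ∀ x, ‖B x‖ ≤ ‖x‖) (u : E) {q : ℝ}
    (hq0 : 0 ≤ q) (hq1 : q < 1) : ContractingWith ⟨q, hq0⟩ (fun x => u + q • B x) := by
  refine ⟨hq1, LipschitzWith.of_dist_le_mul fun x x' => ?_⟩
  calc dist (u + q • B x) (u + q • B x') = q * ‖B (x - x')‖ := by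
        rw [dist_add_left, dist_eq_norm, ← smul_sub, ← map_sub, norm_smul,
          Real.norm_of_nonneg hq0]
    _ ≤ q * dist x x' := by
        rw [dist_eq_norm]; exact mul_le_mul_of_nonneg_left (hB _) hq0

theorem existsUnique_and_tendsto_neumann_sum [CompleteSpace E] (B : E →ₗ[ℝ] E)
    (hB : ∀ x, ‖B x‖ ≤ ‖x‖) (u : E) {q : ℝ} (hq0 : 0 ≤ q) (hq1 : q < 1) :
    (∃! x, x = u + q • B x) ∧
      ∀ x, x = u + q • B x →
        Tendsto (fun m => ∑ k ∈ range m, q ^ k • (B ^ k) u) atTop (𝓝 x) := by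
  have hT := contractingWith_affine B hB u hq0 hq1
  refine ⟨⟨_, hT.fixedPoint_isFixedPt.symm, fun x hx => hT.fixedPoint_unique hx.symm⟩,
    fun x hx => ?_⟩
  rw [hT.fixedPoint_unique hx.symm]
  simpa only [iterate_affine_zero_eq_sum] using hT.tendsto_iterate_fixedPoint 0

end NeumannSeries

section WindowAverage

variable {n ε : ℕ}

noncomputable def winAvgₗ (n ε : ℕ) : (ZMod n → ℝ) →ₗ[ℝ] (ZMod n → ℝ) where
  toFun := winAvg n ε
  map_add' f g := by
    ext t; simp only [winAvg, Pi.add_apply, sum_add_distrib, mul_add]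
  map_smul' c f := by
    ext t
    simp only [winAvg, Pi.smul_apply, smul_eq_mul, mul_sum, RingHom.id_apply, mul_left_comm]

@[simp]
lemma coe_winAvgₗ : ⇑(winAvgₗ n ε) = winAvg n ε := rfl

lemma winAvgₗ_sq_pow_apply (k : ℕ) (f : ZMod n → ℝ) :
    ((winAvgₗ n ε ^ 2) ^ k) f = (winAvg n ε)^[2 * k] f := by
  rw [← pow_mul, Module.End.coe_pow, coe_winAvgₗ]

variable [NeZero n]

lemma supNorm_eq_norm (f : ZMod n → ℝ) : supNorm f = ‖f‖ :=
  le_antisymm (sup'_le _ _ fun t _ => norm_le_pi_norm f t)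
    ((pi_norm_le_iff_of_nonempty _).2 fun t => le_sup' (fun t => |f t|) (mem_univ t))

lemma norm_winAvg_le (f : ZMod n → ℝ) : ‖winAvg n ε f‖ ≤ ‖f‖ := by
  have hcard : (#(Icc (-(ε : ℤ)) ε) : ℝ) = 2 * ε + 1 := by
    rw [Int.card_Icc]; norm_cast; omega
  refine (pi_norm_le_iff_of_nonneg (norm_nonneg f)).2 fun t => ?_
  calc ‖winAvg n ε f t‖ ≤ 1 / (2 * ε + 1) * ∑ _s ∈ Icc (-(ε : ℤ)) ε, ‖f‖ := by
        rw [winAvg, norm_mul, Real.norm_of_nonneg (by positivity)]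
        gcongr
        exact norm_sum_le_of_le _ fun s _ => norm_le_pi_norm f _
    _ = ‖f‖ := by
        rw [sum_const, nsmul_eq_mul, hcard]; field_simp

end WindowAverage

/-- the equation `f = (1/(1+λ)) · (y + λ · A² f)` has a unique
solution, and this solution is the recursive convolutional average
`f = (1/(1+λ)) · ∑_{k=0}^∞ (λ/(1+λ))^k · A^{2k} y`, with the series converging
in sup norm: same geometric decay rate `λ/(1+λ)` as the asymmetric game, but
with the kernel `A^{2k}` in place of `A^k`. -/
theorem symmetric_fixed_point_is_recursive_convolutional_average
    (n ε : ℕ) [NeZero n] (y : ZMod n → ℝ) (lam : ℝ) (hlam : 0 ≤ lam) :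
    (∃! f : ZMod n → ℝ,
      ∀ t, f t = (1 / (1 + lam)) * (y t + lam * winAvg n ε (winAvg n ε f) t)) ∧
    (∀ f : ZMod n → ℝ,
      (∀ t, f t = (1 / (1 + lam)) * (y t + lam * winAvg n ε (winAvg n ε f) t)) →
      Filter.Tendsto
        (fun m : ℕ => supNorm (f - fun t =>
          ∑ k ∈ Finset.range m,
            (1 / (1 + lam)) * ((lam / (1 + lam)) ^ k * (winAvg n ε)^[2 * k] y t)))
        Filter.atTop (nhds 0)) := by
  set q := lam / (1 + lam)
  have hq0 : 0 ≤ q := by positivity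
  have hq1 : q < 1 := (div_lt_one (by positivity)).2 (by linarith)
  have hfix (f : ZMod n → ℝ) :
      (∀ t, f t = (1 / (1 + lam)) * (y t + lam * winAvg n ε (winAvg n ε f) t)) ↔
        f = (1 / (1 + lam)) • y + q • (winAvgₗ n ε ^ 2) f := by
    rw [funext_iff]
    refine forall_congr' fun t => ?_
    simp only [Pi.add_apply, Pi.smul_apply, smul_eq_mul, pow_two, Module.End.mul_apply,
      coe_winAvgₗ, q]
    ring_nf
  have hsum (m : ℕ) : (fun t => ∑ k ∈ range m,
      (1 / (1 + lam)) * (q ^ k * (winAvg n ε)^[2 * k] y t)) =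
        ∑ k ∈ range m, q ^ k • ((winAvgₗ n ε ^ 2) ^ k) ((1 / (1 + lam)) • y) := by
    ext t
    simp only [Finset.sum_apply, Pi.smul_apply, map_smul, winAvgₗ_sq_pow_apply, smul_eq_mul]
    exact sum_congr rfl fun k _ => by ring
  obtain ⟨hunique, htendsto⟩ := existsUnique_and_tendsto_neumann_sum (winAvgₗ n ε ^ 2)
    (fun f => (norm_winAvg_le _).trans (norm_winAvg_le f)) ((1 / (1 + lam)) • y) hq0 hq1
  refine ⟨by simpa only [hfix] using hunique, fun f hf => ?_⟩
  simp only [supNorm_eq_norm, hsum]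
  simpa only [norm_sub_rev] using
    tendsto_iff_norm_sub_tendsto_zero.1 (htendsto f ((hfix f).1 hf))
end
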